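/- The point (0,0) is the unique fixed point of F in Δ. -/
import Mathlib


noncomputable def Fop : ℝ × ℝ → ℝ × ℝ := fun p =>
  ((6*p.2 + 3*p.1 + 4*p.1*p.2)/(6 + 3*p.1),
   (3*p.1 + 4*p.1*p.2)/(6 + 6*p.2 + 3*p.1 + 4*p.1*p.2))

def Dset : Set (ℝ × ℝ) := {p | 0 ≤ p.1 ∧ p.1 ≤ 4 ∧ 0 ≤ p.2 ∧ p.2 ≤ 1}

theorem stmt12 : ∀ p ∈ Dset, (Fop p = p ↔ p = (0, 0)) := by
  rintro ⟨a, b⟩ ⟨ha, ha4, hb, hb1⟩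
  constructor
  · intro h
    have hd1 : (6 + 3*a) ≠ 0 := by nlinarith
    have hd2 : (6 + 6*b + 3*a + 4*a*b) ≠ 0 := by nlinarith [mul_nonneg ha hb]
    have h1 : (6*b + 3*a + 4*a*b)/(6 + 3*a) = a := congrArg Prod.fst h
    have h2 : (3*a + 4*a*b)/(6 + 6*b + 3*a + 4*a*b) = b := congrArg Prod.snd h
    rw [div_eq_iff hd1] at h1
    rw [div_eq_iff hd2] at h2
    have key : 6*a^2 + 12*a*b + 24*a*b^2 + 14*a^2*b + 16*a^2*b^2 = 0 := by
      linear_combination (-(6:ℝ) - 4*a)*h2 + (-6 - 6*b)*h1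
    have ha0 : a = 0 := by
      nlinarith [mul_nonneg ha hb, mul_nonneg (mul_nonneg ha ha) hb,
        mul_nonneg (mul_nonneg ha hb) hb,
        mul_nonneg (mul_nonneg (mul_nonneg ha ha) hb) hb, sq_nonneg a]
    have hb0 : b = 0 := by
      rw [ha0] at h1; linarith
    simp [ha0, hb0]
  · intro h
    rw [h]
    simp [Fop]
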